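/- arXiv:0803.0811 — 6 statements merged into one kernel-verified Lean document; each statement's English description precedes it below -/
import Mathlib

section
/- Let Φ ∈ ℝ^{m×N} and let I, J ⊂ {1,...,N} be disjoint index sets with δ_{|I|+|J|} < 1. Then for arbitrary vectors a ∈ ℝ^{|I|} and b ∈ ℝ^{|J|}, |⟨Φ_I a, Φ_J b⟩| ≤ δ_{|I|+|J|} ‖a‖₂ ‖b‖₂. -/
open scoped BigOperators

/-- Squared-sum Euclidean norm of a finite vector. -/
noncomputable def l2norm {ι : Type*} [Fintype ι] (v : ι → ℝ) : ℝ :=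
  Real.sqrt (∑ i, v i ^ 2)

/-- The ℓ₁ norm of a finite vector. -/
noncomputable def l1norm {ι : Type*} [Fintype ι] (v : ι → ℝ) : ℝ :=
  ∑ i, |v i|

/-- `Φ_I q`: the product of the column submatrix `Φ_I` with a coefficient vector `q`. -/
noncomputable def colMul {m N : ℕ} (Φ : Matrix (Fin m) (Fin N) ℝ) (I : Finset (Fin N))
    (q : I → ℝ) : Fin m → ℝ :=
  fun r => ∑ i : I, Φ r i.1 * q i

/-- `Φ_I^* y`: the transpose of the column submatrix applied to `y`. -/
noncomputable def colTMul {m N : ℕ} (Φ : Matrix (Fin m) (Fin N) ℝ) (I : Finset (Fin N))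
    (y : Fin m → ℝ) : I → ℝ :=
  fun i => ∑ r, Φ r i.1 * y r

/-- The Gram matrix `Φ_I^* Φ_I`. -/
noncomputable def gram {m N : ℕ} (Φ : Matrix (Fin m) (Fin N) ℝ) (I : Finset (Fin N)) :
    Matrix I I ℝ :=
  fun i j => ∑ r, Φ r i.1 * Φ r j.1

/-- `Φ` satisfies the restricted isometry property at sparsity `K` with parameter `δ`. -/
def IsRIP {m N : ℕ} (Φ : Matrix (Fin m) (Fin N) ℝ) (K : ℕ) (δ : ℝ) : Prop :=
  ∀ I : Finset (Fin N), I.card ≤ K → ∀ q : I → ℝ,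
    (1 - δ) * ∑ i, q i ^ 2 ≤ ∑ r, (colMul Φ I q r) ^ 2 ∧
      ∑ r, (colMul Φ I q r) ^ 2 ≤ (1 + δ) * ∑ i, q i ^ 2

/-- The RIP constant `δ_K`: the infimum of all admissible RIP parameters. -/
noncomputable def ripConst {m N : ℕ} (Φ : Matrix (Fin m) (Fin N) ℝ) (K : ℕ) : ℝ :=
  sInf {δ : ℝ | 0 ≤ δ ∧ IsRIP Φ K δ}

/-- Projection coefficients `(Φ_I^* Φ_I)⁻¹ Φ_I^* y`. -/
noncomputable def projCoeff {m N : ℕ} (Φ : Matrix (Fin m) (Fin N) ℝ) (I : Finset (Fin N))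
    (y : Fin m → ℝ) : I → ℝ :=
  (gram Φ I)⁻¹.mulVec (colTMul Φ I y)

/-- Orthogonal projection of `y` onto the column span of `Φ_I`. -/
noncomputable def projVec {m N : ℕ} (Φ : Matrix (Fin m) (Fin N) ℝ) (I : Finset (Fin N))
    (y : Fin m → ℝ) : Fin m → ℝ :=
  colMul Φ I (projCoeff Φ I y)

section Aux
variable {m N : ℕ}

lemma exists_rip (Φ : Matrix (Fin m) (Fin N) ℝ) (K : ℕ) :
    ∃ δ : ℝ, 0 ≤ δ ∧ IsRIP Φ K δ := by
  classical
  set T : ℝ := ∑ r, ∑ i, Φ r i ^ 2 with hT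
  have hT0 : 0 ≤ T := Finset.sum_nonneg fun r _ => Finset.sum_nonneg fun i _ => sq_nonneg _
  refine ⟨1 + T, by linarith, fun I hI q => ?_⟩
  have hSq : 0 ≤ ∑ i, q i ^ 2 := Finset.sum_nonneg fun i _ => sq_nonneg _
  constructor
  · calc (1 - (1 + T)) * ∑ i, q i ^ 2 ≤ 0 := by nlinarith
      _ ≤ ∑ r, (colMul Φ I q r) ^ 2 := Finset.sum_nonneg fun r _ => sq_nonneg _
  · have hrow : ∀ r, (colMul Φ I q r) ^ 2 ≤ (∑ i : I, Φ r i.1 ^ 2) * ∑ i, q i ^ 2 :=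
      fun r => Finset.sum_mul_sq_le_sq_mul_sq Finset.univ (fun i : I => Φ r i.1) q
    have hrow2 : ∀ r, (∑ i : I, Φ r i.1 ^ 2) ≤ ∑ i, Φ r i ^ 2 := by
      intro r
      rw [Finset.sum_coe_sort I (fun i => Φ r i ^ 2)]
      exact Finset.sum_le_sum_of_subset_of_nonneg (Finset.subset_univ I)
        (fun i _ _ => sq_nonneg _)
    have : ∑ r, (colMul Φ I q r) ^ 2 ≤ T * ∑ i, q i ^ 2 := by
      rw [hT, Finset.sum_mul]
      exact Finset.sum_le_sum fun r _ =>
        le_trans (hrow r) (mul_le_mul_of_nonneg_right (hrow2 r) hSq)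
    nlinarith

lemma key (Φ : Matrix (Fin m) (Fin N) ℝ) (I J : Finset (Fin N)) (hIJ : Disjoint I J)
    (a : I → ℝ) (b : J → ℝ) {δ : ℝ} (hR : IsRIP Φ (I.card + J.card) δ) :
    |∑ r, colMul Φ I a r * colMul Φ J b r|
      ≤ δ * ((∑ i, a i ^ 2) + (∑ j, b j ^ 2)) / 2 := by
  classical
  set a' : Fin N → ℝ := fun i => if h : i ∈ I then a ⟨i, h⟩ else 0 with ha'
  set b' : Fin N → ℝ := fun i => if h : i ∈ J then b ⟨i, h⟩ else 0 with hb'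
  set U : Finset (Fin N) := I ∪ J with hU
  have hIU : I ⊆ U := Finset.subset_union_left
  have hJU : J ⊆ U := Finset.subset_union_right
  have hcard : U.card ≤ I.card + J.card := le_of_eq (Finset.card_union_of_disjoint hIJ)
  have hab : ∀ i, a' i * b' i = 0 := by
    intro i
    by_cases h : i ∈ I
    · have : i ∉ J := Finset.disjoint_left.mp hIJ h
      simp [ha', hb', h, this]
    · simp [ha', h]
  have hx : ∀ r, colMul Φ I a r = ∑ i ∈ U, Φ r i * a' i := by
    intro r
    have h1 : colMul Φ I a r = ∑ i ∈ I, Φ r i * a' i := by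
      rw [colMul, ← Finset.sum_coe_sort I (fun i => Φ r i * a' i)]
      exact Finset.sum_congr rfl fun i _ => by simp [ha', i.2]
    rw [h1]
    exact Finset.sum_subset hIU (fun x _ hxI => by simp [ha', hxI])
  have hy : ∀ r, colMul Φ J b r = ∑ i ∈ U, Φ r i * b' i := by
    intro r
    have h1 : colMul Φ J b r = ∑ i ∈ J, Φ r i * b' i := by
      rw [colMul, ← Finset.sum_coe_sort J (fun i => Φ r i * b' i)]
      exact Finset.sum_congr rfl fun i _ => by simp [hb', i.2]
    rw [h1]
    exact Finset.sum_subset hJU (fun x _ hxJ => by simp [hb', hxJ])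
  have hSa : (∑ i, a i ^ 2) = ∑ i ∈ U, a' i ^ 2 := by
    have h1 : (∑ i, a i ^ 2) = ∑ i ∈ I, a' i ^ 2 := by
      rw [← Finset.sum_coe_sort I (fun i => a' i ^ 2)]
      exact Finset.sum_congr rfl fun i _ => by simp [ha', i.2]
    rw [h1]
    exact Finset.sum_subset hIU (fun x _ hxI => by simp [ha', hxI])
  have hSb : (∑ j, b j ^ 2) = ∑ i ∈ U, b' i ^ 2 := by
    have h1 : (∑ j, b j ^ 2) = ∑ i ∈ J, b' i ^ 2 := by
      rw [← Finset.sum_coe_sort J (fun i => b' i ^ 2)]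
      exact Finset.sum_congr rfl fun i _ => by simp [hb', i.2]
    rw [h1]
    exact Finset.sum_subset hJU (fun x _ hxJ => by simp [hb', hxJ])
  set c : U → ℝ := fun i => a' i.1 + b' i.1 with hc
  set d : U → ℝ := fun i => a' i.1 - b' i.1 with hd
  set S : ℝ := (∑ i, a i ^ 2) + (∑ j, b j ^ 2) with hS
  have hsumc : (∑ i, c i ^ 2) = S := by
    have : (∑ i, c i ^ 2) = ∑ i ∈ U, (a' i + b' i) ^ 2 :=
      Finset.sum_coe_sort U (fun i => (a' i + b' i) ^ 2)
    rw [this, hS, hSa, hSb, ← Finset.sum_add_distrib]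
    exact Finset.sum_congr rfl fun i _ => by linear_combination (2 : ℝ) * hab i
  have hsumd : (∑ i, d i ^ 2) = S := by
    have : (∑ i, d i ^ 2) = ∑ i ∈ U, (a' i - b' i) ^ 2 :=
      Finset.sum_coe_sort U (fun i => (a' i - b' i) ^ 2)
    rw [this, hS, hSa, hSb, ← Finset.sum_add_distrib]
    exact Finset.sum_congr rfl fun i _ => by linear_combination (-2 : ℝ) * hab i
  have hcolc : ∀ r, colMul Φ U c r = colMul Φ I a r + colMul Φ J b r := by
    intro r
    have : colMul Φ U c r = ∑ i ∈ U, Φ r i * (a' i + b' i) :=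
      Finset.sum_coe_sort U (fun i => Φ r i * (a' i + b' i))
    rw [this, hx, hy, ← Finset.sum_add_distrib]
    exact Finset.sum_congr rfl fun i _ => by ring
  have hcold : ∀ r, colMul Φ U d r = colMul Φ I a r - colMul Φ J b r := by
    intro r
    have : colMul Φ U d r = ∑ i ∈ U, Φ r i * (a' i - b' i) :=
      Finset.sum_coe_sort U (fun i => Φ r i * (a' i - b' i))
    rw [this, hx, hy, ← Finset.sum_sub_distrib]
    exact Finset.sum_congr rfl fun i _ => by ring
  obtain ⟨hc1, hc2⟩ := hR U hcard c
  obtain ⟨hd1, hd2⟩ := hR U hcard d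
  rw [hsumc] at hc1 hc2
  rw [hsumd] at hd1 hd2
  have hPQ : (∑ r, (colMul Φ U c r) ^ 2) - (∑ r, (colMul Φ U d r) ^ 2)
      = 4 * ∑ r, colMul Φ I a r * colMul Φ J b r := by
    rw [← Finset.sum_sub_distrib, Finset.mul_sum]
    exact Finset.sum_congr rfl fun r _ => by rw [hcolc r, hcold r]; ring
  clear_value S
  rw [abs_le]
  constructor <;> nlinarith

lemma key2 (Φ : Matrix (Fin m) (Fin N) ℝ) (I J : Finset (Fin N)) (hIJ : Disjoint I J)
    (a : I → ℝ) (b : J → ℝ) {δ : ℝ} (hR : IsRIP Φ (I.card + J.card) δ)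
    (hla : 0 < l2norm a) (hlb : 0 < l2norm b) :
    |∑ r, colMul Φ I a r * colMul Φ J b r| ≤ δ * (l2norm a * l2norm b) := by
  classical
  set la := l2norm a with hlaa
  set lb := l2norm b with hlbb
  have hSa : 0 ≤ ∑ i, a i ^ 2 := Finset.sum_nonneg fun i _ => sq_nonneg _
  have hSb : 0 ≤ ∑ j, b j ^ 2 := Finset.sum_nonneg fun j _ => sq_nonneg _
  have hla2 : la ^ 2 = ∑ i, a i ^ 2 := Real.sq_sqrt hSa
  have hlb2 : lb ^ 2 = ∑ j, b j ^ 2 := Real.sq_sqrt hSb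
  set a1 : I → ℝ := fun i => la⁻¹ * a i with ha1
  set b1 : J → ℝ := fun j => lb⁻¹ * b j with hb1
  have col1 : ∀ r, colMul Φ I a1 r = la⁻¹ * colMul Φ I a r := by
    intro r
    rw [colMul, colMul, Finset.mul_sum]
    exact Finset.sum_congr rfl fun i _ => by ring
  have col2 : ∀ r, colMul Φ J b1 r = lb⁻¹ * colMul Φ J b r := by
    intro r
    rw [colMul, colMul, Finset.mul_sum]
    exact Finset.sum_congr rfl fun j _ => by ring
  have hsa1 : (∑ i, a1 i ^ 2) = 1 := by
    have h1 : (∑ i, a1 i ^ 2) = la⁻¹ ^ 2 * ∑ i, a i ^ 2 := by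
      rw [Finset.mul_sum]
      exact Finset.sum_congr rfl fun i _ => by ring
    rw [h1, ← hla2]
    field_simp
  have hsb1 : (∑ j, b1 j ^ 2) = 1 := by
    have h1 : (∑ j, b1 j ^ 2) = lb⁻¹ ^ 2 * ∑ j, b j ^ 2 := by
      rw [Finset.mul_sum]
      exact Finset.sum_congr rfl fun j _ => by ring
    rw [h1, ← hlb2]
    field_simp
  have hk := key Φ I J hIJ a1 b1 hR
  rw [hsa1, hsb1] at hk
  have hinner : (∑ r, colMul Φ I a1 r * colMul Φ J b1 r)
      = (la⁻¹ * lb⁻¹) * ∑ r, colMul Φ I a r * colMul Φ J b r := by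
    rw [Finset.mul_sum]
    exact Finset.sum_congr rfl fun r _ => by rw [col1 r, col2 r]; ring
  rw [hinner, abs_mul, abs_of_pos (by positivity : (0:ℝ) < la⁻¹ * lb⁻¹)] at hk
  have hk' : |∑ r, colMul Φ I a r * colMul Φ J b r| ≤ δ * (1 + 1) / 2 * (la * lb) := by
    calc |∑ r, colMul Φ I a r * colMul Φ J b r|
        = (la⁻¹ * lb⁻¹) * |∑ r, colMul Φ I a r * colMul Φ J b r| * (la * lb) := by
          field_simp
      _ ≤ δ * (1 + 1) / 2 * (la * lb) := by
          apply mul_le_mul_of_nonneg_right hk (by positivity)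
  calc |∑ r, colMul Φ I a r * colMul Φ J b r| ≤ δ * (1 + 1) / 2 * (la * lb) := hk'
    _ = δ * (la * lb) := by ring

end Aux

theorem near_orthogonality_inner {m N : ℕ} (Φ : Matrix (Fin m) (Fin N) ℝ)
    (I J : Finset (Fin N)) (hIJ : Disjoint I J)
    (hδ : ripConst Φ (I.card + J.card) < 1)
    (a : I → ℝ) (b : J → ℝ) :
    |∑ r, colMul Φ I a r * colMul Φ J b r| ≤
      ripConst Φ (I.card + J.card) * l2norm a * l2norm b := by
  classical
  have hne : {δ : ℝ | 0 ≤ δ ∧ IsRIP Φ (I.card + J.card) δ}.Nonempty := by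
    obtain ⟨δ, h1, h2⟩ := exists_rip Φ (I.card + J.card)
    exact ⟨δ, h1, h2⟩
  have hzero : ∀ {ι : Type} [Fintype ι] (v : ι → ℝ), l2norm v = 0 → ∀ i, v i = 0 := by
    intro ι _ v hv i
    rw [l2norm, Real.sqrt_eq_zero'] at hv
    have hnn : ∀ j ∈ Finset.univ, (0:ℝ) ≤ v j ^ 2 := fun j _ => sq_nonneg _
    have := (Finset.sum_eq_zero_iff_of_nonneg hnn).mp
      (le_antisymm hv (Finset.sum_nonneg hnn)) i (Finset.mem_univ i)
    exact (pow_eq_zero_iff two_ne_zero).mp this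
  by_cases hla : l2norm a = 0
  · have h0 : ∀ r, colMul Φ I a r = 0 := fun r => by
      simp [colMul, fun i => hzero a hla i]
    simp [h0, hla]
  · by_cases hlb : l2norm b = 0
    · have h0 : ∀ r, colMul Φ J b r = 0 := fun r => by
        simp [colMul, fun j => hzero b hlb j]
      simp [h0, hlb]
    · have hla' : 0 < l2norm a := lt_of_le_of_ne (Real.sqrt_nonneg _) (Ne.symm hla)
      have hlb' : 0 < l2norm b := lt_of_le_of_ne (Real.sqrt_nonneg _) (Ne.symm hlb)
      have hpos : 0 < l2norm a * l2norm b := by positivity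
      have hle : |∑ r, colMul Φ I a r * colMul Φ J b r| / (l2norm a * l2norm b)
          ≤ sInf {δ : ℝ | 0 ≤ δ ∧ IsRIP Φ (I.card + J.card) δ} := by
        refine le_csInf hne fun δ hδ' => ?_
        exact (div_le_iff₀ hpos).mpr (key2 Φ I J hIJ a b hδ'.2 hla' hlb')
      rw [div_le_iff₀ hpos] at hle
      calc |∑ r, colMul Φ I a r * colMul Φ J b r|
          ≤ sInf {δ : ℝ | 0 ≤ δ ∧ IsRIP Φ (I.card + J.card) δ} * (l2norm a * l2norm b) := hle
        _ = ripConst Φ (I.card + J.card) * l2norm a * l2norm b := by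
            rw [ripConst, mul_assoc]
end

section
/- Let Φ ∈ ℝ^{m×N} and let I, J ⊂ {1,...,N} be disjoint index sets with δ_{|I|+|J|} < 1. Then for every b ∈ ℝ^{|J|}, ‖Φ_I^* Φ_J b‖₂ ≤ δ_{|I|+|J|} ‖b‖₂. -/
open scoped BigOperators

section NearOrthoAux

variable {m N : ℕ}

/-- Combine coefficient vectors on disjoint index sets into one on the union. -/
noncomputable def combineVec (I J : Finset (Fin N)) (a : I → ℝ) (b : J → ℝ) :
    Fin N → ℝ :=
  fun x => if h : x ∈ I then a ⟨x, h⟩ else if h' : x ∈ J then b ⟨x, h'⟩ else 0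

lemma combine_eq_on_I (I J : Finset (Fin N)) (a : I → ℝ) (b : J → ℝ)
    (x : Fin N) (hx : x ∈ I) : combineVec I J a b x = a ⟨x, hx⟩ := by
  simp [combineVec, hx]

lemma combine_eq_on_J (I J : Finset (Fin N)) (hIJ : Disjoint I J) (a : I → ℝ) (b : J → ℝ)
    (x : Fin N) (hx : x ∈ J) : combineVec I J a b x = b ⟨x, hx⟩ := by
  have hxI : x ∉ I := fun h => (Finset.disjoint_left.1 hIJ h) hx
  simp [combineVec, hxI, hx]

lemma sum_union_split (I J : Finset (Fin N)) (hIJ : Disjoint I J) (g : Fin N → ℝ) :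
    ∑ i : (I ∪ J : Finset (Fin N)), g i.1
      = (∑ i : I, g i.1) + ∑ j : J, g j.1 := by
  rw [Finset.sum_coe_sort, Finset.sum_coe_sort, Finset.sum_coe_sort,
    Finset.sum_union hIJ]

lemma sum_combine_mul (I J : Finset (Fin N)) (hIJ : Disjoint I J)
    (a : I → ℝ) (b : J → ℝ) (f : Fin N → ℝ) :
    ∑ i : (I ∪ J : Finset (Fin N)), f i.1 * combineVec I J a b i.1
      = (∑ i : I, f i.1 * a i) + ∑ j : J, f j.1 * b j := by
  rw [sum_union_split I J hIJ (fun x => f x * combineVec I J a b x)]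
  congr 1
  · exact Finset.sum_congr rfl fun i _ => by
      rw [combine_eq_on_I I J a b i.1 i.2]
  · exact Finset.sum_congr rfl fun j _ => by
      rw [combine_eq_on_J I J hIJ a b j.1 j.2]

lemma sum_combine_sq (I J : Finset (Fin N)) (hIJ : Disjoint I J)
    (a : I → ℝ) (b : J → ℝ) :
    ∑ i : (I ∪ J : Finset (Fin N)), combineVec I J a b i.1 ^ 2
      = (∑ i : I, a i ^ 2) + ∑ j : J, b j ^ 2 := by
  rw [sum_union_split I J hIJ (fun x => combineVec I J a b x ^ 2)]
  congr 1
  · exact Finset.sum_congr rfl fun i _ => by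
      rw [combine_eq_on_I I J a b i.1 i.2]
  · exact Finset.sum_congr rfl fun j _ => by
      rw [combine_eq_on_J I J hIJ a b j.1 j.2]

lemma colMul_union (Φ : Matrix (Fin m) (Fin N) ℝ) (I J : Finset (Fin N)) (hIJ : Disjoint I J)
    (a : I → ℝ) (b : J → ℝ) (r : Fin m) :
    colMul Φ (I ∪ J) (fun i => combineVec I J a b i.1) r
      = colMul Φ I a r + colMul Φ J b r := by
  simpa [colMul] using sum_combine_mul I J hIJ a b (fun x => Φ r x)

/-- Existence of an admissible RIP parameter (Frobenius-norm bound). -/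
lemma isRIP_of_big (Φ : Matrix (Fin m) (Fin N) ℝ) (K : ℕ) :
    IsRIP Φ K (1 + ∑ r, ∑ n, Φ r n ^ 2) := by
  intro I hI q
  have hq : (0:ℝ) ≤ ∑ i, q i ^ 2 := Finset.sum_nonneg fun _ _ => sq_nonneg _
  have hC : (0:ℝ) ≤ ∑ r, ∑ n, Φ r n ^ 2 :=
    Finset.sum_nonneg fun _ _ => Finset.sum_nonneg fun _ _ => sq_nonneg _
  have hup : ∑ r, (colMul Φ I q r) ^ 2 ≤ (∑ r, ∑ n, Φ r n ^ 2) * ∑ i, q i ^ 2 := by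
    rw [Finset.sum_mul]
    apply Finset.sum_le_sum
    intro r _
    calc (colMul Φ I q r) ^ 2
        ≤ (∑ i : I, Φ r i.1 ^ 2) * ∑ i, q i ^ 2 :=
          Finset.sum_mul_sq_le_sq_mul_sq _ (fun i : I => Φ r i.1) q
      _ ≤ (∑ n, Φ r n ^ 2) * ∑ i, q i ^ 2 := by
          apply mul_le_mul_of_nonneg_right _ hq
          rw [Finset.sum_coe_sort I (fun n => Φ r n ^ 2)]
          exact Finset.sum_le_sum_of_subset_of_nonneg (Finset.subset_univ I)
            (fun _ _ _ => sq_nonneg _)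
  constructor
  · have h1 : (1 - (1 + ∑ r, ∑ n, Φ r n ^ 2)) * ∑ i, q i ^ 2 ≤ 0 := by
      apply mul_nonpos_of_nonpos_of_nonneg _ hq
      linarith
    have h2 : (0:ℝ) ≤ ∑ r, (colMul Φ I q r) ^ 2 :=
      Finset.sum_nonneg fun _ _ => sq_nonneg _
    linarith
  · have : (∑ r, ∑ n, Φ r n ^ 2) * ∑ i, q i ^ 2
        ≤ (1 + (1 + ∑ r, ∑ n, Φ r n ^ 2)) * ∑ i, q i ^ 2 := by
      apply mul_le_mul_of_nonneg_right _ hq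
      linarith
    linarith

/-- Cross-term bound for a single admissible RIP parameter. -/
lemma cross_bound (Φ : Matrix (Fin m) (Fin N) ℝ) (I J : Finset (Fin N)) (hIJ : Disjoint I J)
    (δ : ℝ) (hrip : IsRIP Φ (I.card + J.card) δ) (a : I → ℝ) (b : J → ℝ) :
    ∑ r, colMul Φ I a r * colMul Φ J b r
      ≤ δ / 2 * ((∑ i, a i ^ 2) + ∑ j, b j ^ 2) := by
  classical
  have hcard : (I ∪ J).card ≤ I.card + J.card := Finset.card_union_le I J
  have hplus := hrip (I ∪ J) hcard (fun i => combineVec I J a b i.1)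
  have hminus := hrip (I ∪ J) hcard (fun i => combineVec I J a (-b) i.1)
  rw [sum_combine_sq I J hIJ a b] at hplus
  rw [sum_combine_sq I J hIJ a (-b)] at hminus
  have hbneg : ∑ j : J, (-b) j ^ 2 = ∑ j : J, b j ^ 2 := by
    simp
  rw [hbneg] at hminus
  have hup : ∑ r, (colMul Φ I a r + colMul Φ J b r) ^ 2
      ≤ (1 + δ) * ((∑ i, a i ^ 2) + ∑ j, b j ^ 2) := by
    have := hplus.2
    calc ∑ r, (colMul Φ I a r + colMul Φ J b r) ^ 2
        = ∑ r, (colMul Φ (I ∪ J) (fun i => combineVec I J a b i.1) r) ^ 2 := by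
          apply Finset.sum_congr rfl
          intro r _
          rw [colMul_union Φ I J hIJ a b r]
      _ ≤ _ := this
  have hdown : (1 - δ) * ((∑ i, a i ^ 2) + ∑ j, b j ^ 2)
      ≤ ∑ r, (colMul Φ I a r - colMul Φ J b r) ^ 2 := by
    have := hminus.1
    calc (1 - δ) * ((∑ i, a i ^ 2) + ∑ j, b j ^ 2)
        ≤ ∑ r, (colMul Φ (I ∪ J) (fun i => combineVec I J a (-b) i.1) r) ^ 2 := this
      _ = ∑ r, (colMul Φ I a r - colMul Φ J b r) ^ 2 := by
          apply Finset.sum_congr rfl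
          intro r _
          rw [colMul_union Φ I J hIJ a (-b) r]
          have : colMul Φ J (-b) r = - colMul Φ J b r := by
            simp [colMul, Finset.sum_neg_distrib]
          rw [this]; ring
  have hpol : ∑ r, (colMul Φ I a r + colMul Φ J b r) ^ 2
      - ∑ r, (colMul Φ I a r - colMul Φ J b r) ^ 2
      = 4 * ∑ r, colMul Φ I a r * colMul Φ J b r := by
    rw [← Finset.sum_sub_distrib, Finset.mul_sum]
    apply Finset.sum_congr rfl
    intro r _
    ring
  linarith

/-- adjoint identity: ‖Φ_I^* y‖² = ⟨Φ_I (Φ_I^* y), y⟩ -/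
lemma adjoint_sq (Φ : Matrix (Fin m) (Fin N) ℝ) (I : Finset (Fin N)) (y : Fin m → ℝ) :
    ∑ i : I, colTMul Φ I y i ^ 2
      = ∑ r, colMul Φ I (colTMul Φ I y) r * y r := by
  classical
  simp only [colMul, colTMul, Finset.sum_mul]
  rw [Finset.sum_comm]
  apply Finset.sum_congr rfl
  intro i _
  rw [sq, Finset.sum_mul]
  apply Finset.sum_congr rfl
  intro r _
  ring

lemma colMul_smul (Φ : Matrix (Fin m) (Fin N) ℝ) (I : Finset (Fin N)) (t : ℝ)
    (a : I → ℝ) (r : Fin m) :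
    colMul Φ I (fun i => t * a i) r = t * colMul Φ I a r := by
  simp [colMul, Finset.mul_sum]
  apply Finset.sum_congr rfl
  intro i _
  ring

/-- Main per-δ bound. -/
lemma per_delta (Φ : Matrix (Fin m) (Fin N) ℝ) (I J : Finset (Fin N)) (hIJ : Disjoint I J)
    (δ : ℝ) (hδ0 : 0 ≤ δ) (hrip : IsRIP Φ (I.card + J.card) δ) (b : J → ℝ) :
    l2norm (colTMul Φ I (colMul Φ J b)) ≤ δ * l2norm b := by
  classical
  set y := colMul Φ J b with hy
  set w := colTMul Φ I y with hw
  set A := ∑ i : I, w i ^ 2 with hA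
  set B := ∑ j : J, b j ^ 2 with hB
  have hAnn : 0 ≤ A := Finset.sum_nonneg fun _ _ => sq_nonneg _
  have hBnn : 0 ≤ B := Finset.sum_nonneg fun _ _ => sq_nonneg _
  have hgoal : l2norm w = Real.sqrt A := by rw [hA]; rfl
  have hgoalb : l2norm b = Real.sqrt B := by rw [hB]; rfl
  rcases eq_or_lt_of_le hAnn with hA0 | hApos
  · rw [hgoal, ← hA0, Real.sqrt_zero]
    exact mul_nonneg hδ0 (Real.sqrt_nonneg _)
  · -- A > 0; first rule out B = 0
    rcases eq_or_lt_of_le hBnn with hB0 | hBpos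
    · exfalso
      have hb0 : ∀ j : J, b j = 0 := by
        intro j
        have := (Finset.sum_eq_zero_iff_of_nonneg
          (fun (j : J) _ => sq_nonneg (b j))).1 hB0.symm j (Finset.mem_univ j)
        exact pow_eq_zero_iff (two_ne_zero) |>.1 this
      have hy0 : ∀ r, y r = 0 := by
        intro r
        simp [hy, colMul, hb0]
      have hw0 : ∀ i : I, w i = 0 := by
        intro i
        simp only [hw, colTMul]
        apply Finset.sum_eq_zero
        intro r _
        rw [hy0 r, mul_zero]
      have : A = 0 := Finset.sum_eq_zero fun i _ => by rw [hw0 i]; ring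
      linarith
    · -- A > 0 and B > 0
      set t : ℝ := Real.sqrt B / Real.sqrt A with ht
      have hsA : Real.sqrt A > 0 := Real.sqrt_pos.2 hApos
      have hsB : Real.sqrt B > 0 := Real.sqrt_pos.2 hBpos
      have ht0 : 0 < t := div_pos hsB hsA
      have hkey := cross_bound Φ I J hIJ δ hrip (fun i => t * w i) b
      have hcross : ∑ r, colMul Φ I (fun i => t * w i) r * colMul Φ J b r = t * A := by
        calc ∑ r, colMul Φ I (fun i => t * w i) r * colMul Φ J b r
            = t * ∑ r, colMul Φ I w r * y r := by
              rw [Finset.mul_sum]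
              apply Finset.sum_congr rfl
              intro r _
              rw [colMul_smul]; ring
          _ = t * A := by rw [hA, hw, adjoint_sq]
      have hsq : ∑ i : I, (t * w i) ^ 2 = t ^ 2 * A := by
        rw [hA, Finset.mul_sum]
        apply Finset.sum_congr rfl
        intro i _
        ring
      rw [hcross, hsq] at hkey
      have hsqA : Real.sqrt A * Real.sqrt A = A := Real.mul_self_sqrt hAnn
      have hsqB : Real.sqrt B * Real.sqrt B = B := Real.mul_self_sqrt hBnn
      have htA : t * A = Real.sqrt B * Real.sqrt A := by
        rw [ht]
        field_simp
        nlinarith [hsqA]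
      have ht2A : t ^ 2 * A = B := by
        rw [ht, div_pow, Real.sq_sqrt hAnn, Real.sq_sqrt hBnn,
          div_mul_cancel₀ _ (ne_of_gt hApos)]
      rw [htA, ht2A] at hkey
      rw [hgoal, hgoalb]
      nlinarith [hkey, hsqB, hsB, hsA]

end NearOrthoAux

theorem near_orthogonality_matrix {m N : ℕ} (Φ : Matrix (Fin m) (Fin N) ℝ)
    (I J : Finset (Fin N)) (hIJ : Disjoint I J)
    (hδ : ripConst Φ (I.card + J.card) < 1)
    (b : J → ℝ) :
    l2norm (colTMul Φ I (colMul Φ J b)) ≤ ripConst Φ (I.card + J.card) * l2norm b := by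
  classical
  set K := I.card + J.card with hK
  set S : Set ℝ := {δ : ℝ | 0 ≤ δ ∧ IsRIP Φ K δ} with hS
  have hC : (0:ℝ) ≤ ∑ r, ∑ n, Φ r n ^ 2 :=
    Finset.sum_nonneg fun _ _ => Finset.sum_nonneg fun _ _ => sq_nonneg _
  have hne : S.Nonempty := ⟨1 + ∑ r, ∑ n, Φ r n ^ 2, ⟨by linarith, isRIP_of_big Φ K⟩⟩
  have hmain : ∀ δ ∈ S, l2norm (colTMul Φ I (colMul Φ J b)) ≤ δ * l2norm b :=
    fun δ hδ' => per_delta Φ I J hIJ δ hδ'.1 hδ'.2 b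
  have hripS : ripConst Φ K = sInf S := rfl
  have hbnn : 0 ≤ l2norm b := Real.sqrt_nonneg _
  rcases eq_or_lt_of_le hbnn with hb0 | hbpos
  · obtain ⟨δ, hδS⟩ := hne
    have h1 := hmain δ hδS
    rw [← hb0] at h1 ⊢
    rw [mul_zero] at h1 ⊢
    exact h1
  · have hdiv : l2norm (colTMul Φ I (colMul Φ J b)) / l2norm b ≤ sInf S := by
      apply le_csInf hne
      intro δ hδ'
      rw [div_le_iff₀ hbpos]
      exact hmain δ hδ'
    calc l2norm (colTMul Φ I (colMul Φ J b))
        = (l2norm (colTMul Φ I (colMul Φ J b)) / l2norm b) * l2norm b := by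
          field_simp
      _ ≤ sInf S * l2norm b := mul_le_mul_of_nonneg_right hdiv hbnn
      _ = ripConst Φ K * l2norm b := by rw [hripS]
end

section
/- Let Φ ∈ ℝ^{m×N}, let I, J be disjoint index sets with δ_{|I|+|J|} < 1, and let y ∈ span(Φ_I). Let y_p = proj(y, Φ_J) be the orthogonal projection of y onto span(Φ_J). Then ‖y_p‖₂ ≤ (δ_{|I|+|J|} / (1 - δ_{max(|I|,|J|)})) ‖y‖₂. -/
open scoped BigOperators

/-!
Write `y = Φx` and `y_p = Φz` with `x`, `z` supported on `I`, `J`. As `y - y_p ⊥ span(Φ_J)`,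
`‖y_p‖² = ⟪Φz, Φx⟫`. Polarizing the RIP bounds for `Φ(x ± z)`, whose supports lie in `I ∪ J`,
gives `⟪Φz, Φx⟫ ≤ δ_{|I|+|J|} ‖z‖ ‖x‖`, while with `c = δ_{max(|I|,|J|)}` the lower RIP bound
gives `√(1 - c) ‖z‖ ≤ ‖y_p‖` and `√(1 - c) ‖x‖ ≤ ‖y‖`. Hence
`(1 - c) ‖y_p‖² ≤ δ_{|I|+|J|} ‖y_p‖ ‖y‖`. The infimum `δ_K` is itself an RIP parameter, since the
admissible parameters form a closed set.
-/

open Function Matrix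

section DotProduct

variable {ι R : Type*} [Fintype ι]

lemma dotProduct_self_nonneg (v : ι → ℝ) : 0 ≤ v ⬝ᵥ v :=
  Finset.sum_nonneg fun i _ => mul_self_nonneg (v i)

lemma dotProduct_self_pos {v : ι → ℝ} (hv : v ≠ 0) : 0 < v ⬝ᵥ v :=
  (dotProduct_self_nonneg v).lt_of_ne (Ne.symm (dotProduct_self_eq_zero.not.mpr hv))

lemma dotProduct_eq_zero_of_disjoint_support [NonUnitalNonAssocSemiring R] {v w : ι → R}
    (h : Disjoint (support v) (support w)) : v ⬝ᵥ w = 0 :=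
  Finset.sum_eq_zero fun i _ => show v i * w i = 0 by
    by_cases hv : v i = 0
    · rw [hv, zero_mul]
    · rw [notMem_support.mp (Set.disjoint_left.mp h hv), mul_zero]

lemma dotProduct_restrict_of_support_subset [NonUnitalNonAssocSemiring R] {S : Finset ι}
    {x : ι → R} (hx : support x ⊆ S) (w : ι → R) :
    (fun i : S => w i) ⬝ᵥ (fun i : S => x i) = w ⬝ᵥ x := by
  simp only [dotProduct]
  rw [Finset.sum_coe_sort S (fun i => w i * x i)]
  exact Finset.sum_subset (Finset.subset_univ S) fun i _ hi => by
    rw [notMem_support.mp (fun h => hi (hx h)), mul_zero]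

lemma sum_sq_eq_dotProduct_self (v : ι → ℝ) : ∑ i, v i ^ 2 = v ⬝ᵥ v :=
  Finset.sum_congr rfl fun i _ => sq (v i)

lemma l2norm_eq_sqrt_dotProduct (v : ι → ℝ) : l2norm v = √(v ⬝ᵥ v) := by
  rw [l2norm, sum_sq_eq_dotProduct_self]

end DotProduct

variable {m N : ℕ}

lemma colMul_restrict_of_support_subset (Φ : Matrix (Fin m) (Fin N) ℝ) {S : Finset (Fin N)}
    {x : Fin N → ℝ} (hx : support x ⊆ S) : colMul Φ S (fun i => x i) = Φ *ᵥ x :=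
  funext fun r => dotProduct_restrict_of_support_subset hx (Φ r)

namespace IsRIP

variable {Φ : Matrix (Fin m) (Fin N) ℝ} {K : ℕ} {δ : ℝ}

lemma mono (h : IsRIP Φ K δ) {K' : ℕ} (hK : K' ≤ K) : IsRIP Φ K' δ :=
  fun S hS => h S (hS.trans hK)

lemma of_support_subset (h : IsRIP Φ K δ) {S : Finset (Fin N)} (hS : S.card ≤ K)
    {x : Fin N → ℝ} (hx : support x ⊆ S) :
    (1 - δ) * (x ⬝ᵥ x) ≤ Φ *ᵥ x ⬝ᵥ Φ *ᵥ x ∧ Φ *ᵥ x ⬝ᵥ Φ *ᵥ x ≤ (1 + δ) * (x ⬝ᵥ x) := by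
  have := h S hS (fun i => x i)
  rwa [sum_sq_eq_dotProduct_self, sum_sq_eq_dotProduct_self, colMul_restrict_of_support_subset Φ hx,
    dotProduct_restrict_of_support_subset hx] at this

variable {I J : Finset (Fin N)} {x z : Fin N → ℝ}

/- Polarization: `4 ⟪Φx, Φz⟫ = ‖Φ(x + z)‖² - ‖Φ(x - z)‖²`, while `‖x ± z‖² = ‖x‖² + ‖z‖²`
because `x` and `z` have disjoint supports. -/
lemma mulVec_dotProduct_le_half (h : IsRIP Φ K δ) (hIJ : Disjoint I J)
    (hK : I.card + J.card ≤ K) (hx : support x ⊆ I) (hz : support z ⊆ J) :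
    Φ *ᵥ x ⬝ᵥ Φ *ᵥ z ≤ δ / 2 * (x ⬝ᵥ x + z ⬝ᵥ z) := by
  have hcard : (I ∪ J).card ≤ K := (Finset.card_union_le I J).trans hK
  have hsupp : ∀ w : Fin N → ℝ, support w ⊆ J → support (x + w) ⊆ ↑(I ∪ J) := fun w hw =>
    (support_add x w).trans (by rw [Finset.coe_union]; exact Set.union_subset_union hx hw)
  have hxz : x ⬝ᵥ z = 0 := dotProduct_eq_zero_of_disjoint_support <|
    (Finset.disjoint_coe.mpr hIJ).mono hx hz
  obtain ⟨-, hplus⟩ := h.of_support_subset hcard (hsupp z hz)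
  obtain ⟨hminus, -⟩ := h.of_support_subset hcard (hsupp (-z) (by rwa [support_neg]))
  simp only [mulVec_add, mulVec_neg, dotProduct_add, add_dotProduct, dotProduct_neg,
    neg_dotProduct, dotProduct_comm z x, dotProduct_comm (Φ *ᵥ z) (Φ *ᵥ x), hxz] at hplus hminus
  linarith

lemma mulVec_dotProduct_le (h : IsRIP Φ K δ) (hIJ : Disjoint I J)
    (hK : I.card + J.card ≤ K) (hx : support x ⊆ I) (hz : support z ⊆ J) :
    Φ *ᵥ x ⬝ᵥ Φ *ᵥ z ≤ δ * √(x ⬝ᵥ x) * √(z ⬝ᵥ z) := by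
  by_cases hx0 : x = 0
  · simp [hx0]
  by_cases hz0 : z = 0
  · simp [hz0]
  obtain ⟨t, ht, hxx⟩ : ∃ t, 0 < t ∧ x ⬝ᵥ x = t * t :=
    ⟨√(x ⬝ᵥ x), Real.sqrt_pos.mpr (dotProduct_self_pos hx0),
      (Real.mul_self_sqrt (dotProduct_self_nonneg x)).symm⟩
  obtain ⟨u, hu, hzz⟩ : ∃ u, 0 < u ∧ z ⬝ᵥ z = u * u :=
    ⟨√(z ⬝ᵥ z), Real.sqrt_pos.mpr (dotProduct_self_pos hz0),
      (Real.mul_self_sqrt (dotProduct_self_nonneg z)).symm⟩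
  rw [hxx, hzz, Real.sqrt_mul_self ht.le, Real.sqrt_mul_self hu.le]
  -- the half-sum bound is sharp for `u • x` and `t • z`, which have the same norm
  have hscaled := h.mulVec_dotProduct_le_half hIJ hK
    ((support_const_smul_subset u x).trans hx) ((support_const_smul_subset t z).trans hz)
  simp only [mulVec_smul, smul_dotProduct, dotProduct_smul, smul_eq_mul, hxx, hzz] at hscaled
  refine le_of_mul_le_mul_left ?_ (mul_pos hu ht)
  linarith

end IsRIP

section RIPConstant

variable (Φ : Matrix (Fin m) (Fin N) ℝ) (K : ℕ)

/- Cauchy–Schwarz row by row: every `δ ≥ ∑ᵣₙ Φᵣₙ²` satisfies the upper bound, and the lower bound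
is void once `δ ≥ 1`. -/
lemma exists_isRIP : ∃ δ, 0 ≤ δ ∧ IsRIP Φ K δ := by
  set T := ∑ r, ∑ n, Φ r n ^ 2
  have hT : 0 ≤ T := by positivity
  refine ⟨1 + T, by positivity, fun S _ q => ⟨?_, ?_⟩⟩
  · have hq : 0 ≤ ∑ i, q i ^ 2 := by positivity
    calc (1 - (1 + T)) * ∑ i, q i ^ 2 ≤ 0 := by nlinarith
      _ ≤ ∑ r, colMul Φ S q r ^ 2 := by positivity
  · have hrow : ∀ r, colMul Φ S q r ^ 2 ≤ (∑ n, Φ r n ^ 2) * ∑ i, q i ^ 2 := fun r =>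
      (Finset.sum_mul_sq_le_sq_mul_sq _ (fun i : S => Φ r i) q).trans <|
        mul_le_mul_of_nonneg_right (by
          rw [Finset.sum_coe_sort S (fun n => Φ r n ^ 2)]
          exact Finset.sum_le_sum_of_subset_of_nonneg (Finset.subset_univ S)
            fun n _ _ => sq_nonneg _) (by positivity)
    calc ∑ r, colMul Φ S q r ^ 2 ≤ T * ∑ i, q i ^ 2 := by
          rw [Finset.sum_mul]; exact Finset.sum_le_sum fun r _ => hrow r
      _ ≤ (1 + (1 + T)) * ∑ i, q i ^ 2 := by gcongr; linarith

lemma isClosed_setOf_isRIP : IsClosed {δ : ℝ | 0 ≤ δ ∧ IsRIP Φ K δ} := by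
  simp only [IsRIP, Set.ofPred_and, Set.ofPred_forall]
  exact isClosed_Ici.inter <| isClosed_iInter fun S => isClosed_iInter fun _ =>
    isClosed_iInter fun q => (isClosed_le (by fun_prop) continuous_const).inter
      (isClosed_le continuous_const (by fun_prop))

lemma ripConst_nonneg_and_isRIP : 0 ≤ ripConst Φ K ∧ IsRIP Φ K (ripConst Φ K) :=
  (isClosed_setOf_isRIP Φ K).csInf_mem (exists_isRIP Φ K) ⟨0, fun _ h => h.1⟩

lemma ripConst_nonneg : 0 ≤ ripConst Φ K := (ripConst_nonneg_and_isRIP Φ K).1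

lemma isRIP_ripConst : IsRIP Φ K (ripConst Φ K) := (ripConst_nonneg_and_isRIP Φ K).2

lemma ripConst_le {δ : ℝ} (hδ : 0 ≤ δ) (h : IsRIP Φ K δ) : ripConst Φ K ≤ δ :=
  csInf_le ⟨0, fun _ h => h.1⟩ ⟨hδ, h⟩

lemma ripConst_mono {K' : ℕ} (hK : K' ≤ K) : ripConst Φ K' ≤ ripConst Φ K :=
  ripConst_le Φ K' (ripConst_nonneg Φ K) ((isRIP_ripConst Φ K).mono hK)

end RIPConstant

section Projection

variable (Φ : Matrix (Fin m) (Fin N) ℝ) (J : Finset (Fin N))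

lemma colMul_dotProduct (q : J → ℝ) (w : Fin m → ℝ) :
    colMul Φ J q ⬝ᵥ w = q ⬝ᵥ colTMul Φ J w := by
  change Φ.submatrix id Subtype.val *ᵥ q ⬝ᵥ w = q ⬝ᵥ (Φ.submatrix id Subtype.val)ᵀ *ᵥ w
  rw [dotProduct_comm, dotProduct_mulVec, mulVec_transpose, dotProduct_comm]

lemma colTMul_colMul (q : J → ℝ) : colTMul Φ J (colMul Φ J q) = gram Φ J *ᵥ q :=
  mulVec_mulVec q (Φ.submatrix id Subtype.val)ᵀ (Φ.submatrix id Subtype.val)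

variable {Φ J}

lemma IsRIP.isUnit_det_gram {K : ℕ} {δ : ℝ} (h : IsRIP Φ K δ) (hJ : J.card ≤ K) (hδ : δ < 1) :
    IsUnit (gram Φ J).det := by
  set A := Φ.submatrix id (Subtype.val : J → Fin N)
  have hinj : Injective A.mulVec := by
    refine (injective_iff_map_eq_zero (mulVecLin A)).mpr fun q hq => ?_
    have hlow := (h J hJ q).1
    rw [sum_sq_eq_dotProduct_self, sum_sq_eq_dotProduct_self, show colMul Φ J q = 0 from hq,
      zero_dotProduct] at hlow
    exact dotProduct_self_eq_zero.mp <| le_antisymm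
      (nonpos_of_mul_nonpos_right hlow (sub_pos.mpr hδ)) (dotProduct_self_nonneg q)
  have hpos := PosDef.conjTranspose_mul_self _ hinj
  rw [conjTranspose_eq_transpose_of_trivial] at hpos
  exact (isUnit_iff_isUnit_det _).mp hpos.isUnit

lemma colTMul_projVec (hG : IsUnit (gram Φ J).det) (y : Fin m → ℝ) :
    colTMul Φ J (projVec Φ J y) = colTMul Φ J y := by
  rw [projVec, colTMul_colMul, projCoeff, mulVec_mulVec, mul_nonsing_inv _ hG, one_mulVec]

lemma projVec_dotProduct_self (hG : IsUnit (gram Φ J).det) (y : Fin m → ℝ) :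
    projVec Φ J y ⬝ᵥ projVec Φ J y = projVec Φ J y ⬝ᵥ y := by
  change colMul Φ J _ ⬝ᵥ _ = colMul Φ J _ ⬝ᵥ _
  rw [colMul_dotProduct, colMul_dotProduct, colTMul_projVec hG]

end Projection

lemma support_extend_val_subset {S : Finset (Fin N)} (q : S → ℝ) :
    support (extend Subtype.val q 0) ⊆ S :=
  support_extend_zero_subset.trans (Set.image_subset_iff.mpr fun i _ => i.2)

lemma colMul_eq_mulVec_extend (Φ : Matrix (Fin m) (Fin N) ℝ) (S : Finset (Fin N)) (q : S → ℝ) :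
    colMul Φ S q = Φ *ᵥ extend Subtype.val q 0 := by
  conv_lhs => rw [← extend_comp Subtype.val_injective q 0]
  exact colMul_restrict_of_support_subset Φ (support_extend_val_subset q)

lemma IsRIP.sqrt_one_sub_mul_le {Φ : Matrix (Fin m) (Fin N) ℝ} {K : ℕ} {δ : ℝ}
    (h : IsRIP Φ K δ) (hδ : δ ≤ 1) {S : Finset (Fin N)} (hS : S.card ≤ K) {x : Fin N → ℝ}
    (hx : support x ⊆ S) : √(1 - δ) * √(x ⬝ᵥ x) ≤ √(Φ *ᵥ x ⬝ᵥ Φ *ᵥ x) := by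
  rw [← Real.sqrt_mul (sub_nonneg.mpr hδ)]
  exact Real.sqrt_le_sqrt (h.of_support_subset hS hx).1

lemma sqrt_dotProduct_le_of_orthogonal {Φ : Matrix (Fin m) (Fin N) ℝ} {I J : Finset (Fin N)}
    (hIJ : Disjoint I J) {δ c : ℝ} {K : ℕ} (hδ : IsRIP Φ (I.card + J.card) δ) (hδ0 : 0 ≤ δ)
    (hc : IsRIP Φ K c) (hc1 : c < 1) (hI : I.card ≤ K) (hJ : J.card ≤ K) {x z : Fin N → ℝ}
    (hx : support x ⊆ I) (hz : support z ⊆ J) (horth : Φ *ᵥ z ⬝ᵥ Φ *ᵥ z = Φ *ᵥ z ⬝ᵥ Φ *ᵥ x) :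
    √(Φ *ᵥ z ⬝ᵥ Φ *ᵥ z) ≤ δ / (1 - c) * √(Φ *ᵥ x ⬝ᵥ Φ *ᵥ x) := by
  set p := √(Φ *ᵥ z ⬝ᵥ Φ *ᵥ z)
  set q := √(Φ *ᵥ x ⬝ᵥ Φ *ᵥ x)
  have hp : 0 ≤ p := Real.sqrt_nonneg _
  have hq : 0 ≤ q := Real.sqrt_nonneg _
  have key : (1 - c) * (p * p) ≤ δ * p * q :=
    calc (1 - c) * (p * p) = (1 - c) * (Φ *ᵥ z ⬝ᵥ Φ *ᵥ x) := by
          rw [Real.mul_self_sqrt (dotProduct_self_nonneg _), horth]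
      _ ≤ (1 - c) * (δ * √(z ⬝ᵥ z) * √(x ⬝ᵥ x)) := mul_le_mul_of_nonneg_left
          (hδ.mulVec_dotProduct_le hIJ.symm (Nat.add_comm _ _).le hz hx) (sub_nonneg.mpr hc1.le)
      _ = δ * (√(1 - c) * √(z ⬝ᵥ z)) * (√(1 - c) * √(x ⬝ᵥ x)) := by
          linear_combination (δ * √(z ⬝ᵥ z) * √(x ⬝ᵥ x)) *
            (Real.mul_self_sqrt (sub_nonneg.mpr hc1.le)).symm
      _ ≤ δ * p * q := by
          gcongr
          · exact hc.sqrt_one_sub_mul_le hc1.le hJ hz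
          · exact hc.sqrt_one_sub_mul_le hc1.le hI hx
  rw [div_mul_eq_mul_div, le_div_iff₀ (sub_pos.mpr hc1)]
  rcases hp.eq_or_lt with hp0 | hp0
  · rw [← hp0, zero_mul]
    positivity
  · exact le_of_mul_le_mul_left (by linarith) hp0

theorem projection_norm_bound {m N : ℕ} (Φ : Matrix (Fin m) (Fin N) ℝ)
    (I J : Finset (Fin N)) (hIJ : Disjoint I J)
    (hδ : ripConst Φ (I.card + J.card) < 1)
    (y : Fin m → ℝ) (hy : ∃ a : I → ℝ, y = colMul Φ I a) :
    l2norm (projVec Φ J y) ≤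
      ripConst Φ (I.card + J.card) / (1 - ripConst Φ (max I.card J.card)) * l2norm y := by
  obtain ⟨a, rfl⟩ := hy
  have hc : ripConst Φ (max I.card J.card) < 1 :=
    (ripConst_mono Φ _ (max_le le_self_add le_add_self)).trans_lt hδ
  have hcRIP := isRIP_ripConst Φ (max I.card J.card)
  have horth := projVec_dotProduct_self (hcRIP.isUnit_det_gram (le_max_right _ _) hc)
    (colMul Φ I a)
  rw [l2norm_eq_sqrt_dotProduct, l2norm_eq_sqrt_dotProduct]
  rw [projVec, colMul_eq_mulVec_extend Φ J, colMul_eq_mulVec_extend Φ I] at horth ⊢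
  exact sqrt_dotProduct_le_of_orthogonal hIJ (isRIP_ripConst Φ _) (ripConst_nonneg Φ _) hcRIP hc
    (le_max_left _ _) (le_max_right _ _) (support_extend_val_subset a)
    (support_extend_val_subset _) horth
end

section
/- Let x ∈ ℝ^N be K-sparse with support T, y = Φx, and let T⁰ be the set of K indices of largest-magnitude entries of Φ^* y. If Φ satisfies the RIP with constant δ_{2K} < 1/2, then T⁰ ∩ T ≠ ∅, i.e., at least one correct support index is captured by the correlation-maximization initialization. -/
open scoped BigOperators

noncomputable def extv {N : ℕ} (I : Finset (Fin N)) (p : I → ℝ) : Fin N → ℝ :=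
  fun j => if h : j ∈ I then p ⟨j, h⟩ else 0

lemma extv_apply {N : ℕ} (I : Finset (Fin N)) (p : I → ℝ) (i : I) :
    extv I p i.1 = p i := by simp [extv]

lemma extv_support {N : ℕ} (I : Finset (Fin N)) (p : I → ℝ) (j : Fin N)
    (h : extv I p j ≠ 0) : j ∈ I := by
  by_contra hj; exact h (dif_neg hj)

lemma sum_restrict {N : ℕ} (I : Finset (Fin N)) (v : Fin N → ℝ)
    (hs : ∀ j, v j ≠ 0 → j ∈ I) (g : Fin N → ℝ → ℝ) (hg : ∀ j, g j 0 = 0) :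
    ∑ i : I, g i.1 (v i.1) = ∑ j, g j (v j) := by
  rw [Finset.sum_coe_sort I (fun j => g j (v j))]
  refine Finset.sum_subset (Finset.subset_univ I) ?_
  intro j _ hj
  have : v j = 0 := by by_contra h; exact hj (hs j h)
  rw [this, hg]

lemma extv_sum_sq {N : ℕ} (I : Finset (Fin N)) (p : I → ℝ) :
    ∑ j, extv I p j ^ 2 = ∑ i : I, p i ^ 2 := by
  rw [← sum_restrict I (extv I p) (extv_support I p) (fun _ t => t ^ 2) (by norm_num)]
  exact Finset.sum_congr rfl fun i _ => by rw [extv_apply]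

lemma mulVec_extv {m N : ℕ} (Φ : Matrix (Fin m) (Fin N) ℝ) (I : Finset (Fin N)) (p : I → ℝ)
    (r : Fin m) : Φ.mulVec (extv I p) r = colMul Φ I p r := by
  show ∑ j, Φ r j * extv I p j = ∑ i : I, Φ r i.1 * p i
  rw [← sum_restrict I (extv I p) (extv_support I p) (fun j t => Φ r j * t)
    (fun j => mul_zero _)]
  exact Finset.sum_congr rfl fun i _ => by rw [extv_apply]

-- adjoint identity
lemma adjoint_id {m N : ℕ} (Φ : Matrix (Fin m) (Fin N) ℝ) (I : Finset (Fin N)) (p : I → ℝ)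
    (y : Fin m → ℝ) :
    ∑ r, colMul Φ I p r * y r = ∑ i : I, p i * colTMul Φ I y i := by
  simp only [colMul, colTMul, Finset.sum_mul, Finset.mul_sum]
  rw [Finset.sum_comm]
  exact Finset.sum_congr rfl fun i _ => Finset.sum_congr rfl fun r _ => by ring

lemma ripVec {m N : ℕ} {Φ : Matrix (Fin m) (Fin N) ℝ} {K : ℕ} {δ : ℝ}
    (hRIP : IsRIP Φ K δ) (v : Fin N → ℝ) (I : Finset (Fin N)) (hI : I.card ≤ K)
    (hs : ∀ j, v j ≠ 0 → j ∈ I) :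
    (1 - δ) * ∑ j, v j ^ 2 ≤ ∑ r, (Φ.mulVec v r) ^ 2 ∧
      ∑ r, (Φ.mulVec v r) ^ 2 ≤ (1 + δ) * ∑ j, v j ^ 2 := by
  have hv : extv I (fun i => v i.1) = v := by
    funext j
    by_cases hj : j ∈ I
    · simp [extv, hj]
    · have : v j = 0 := by by_contra h; exact hj (hs j h)
      simp [extv, hj, this]
  have h1 : ∀ r, Φ.mulVec v r = colMul Φ I (fun i => v i.1) r := fun r => by
    rw [← hv, mulVec_extv]; rw [hv]
  have h2 : ∑ j, v j ^ 2 = ∑ i : I, v i.1 ^ 2 := by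
    rw [← extv_sum_sq I (fun i => v i.1), hv]
  have := hRIP I hI (fun i => v i.1)
  simp only [← h1] at this
  rw [h2]
  exact this

lemma crossIneq {m N : ℕ} {Φ : Matrix (Fin m) (Fin N) ℝ} {K : ℕ} {δ : ℝ}
    (hRIP : IsRIP Φ K δ) (u v : Fin N → ℝ) (U : Finset (Fin N)) (hU : U.card ≤ K)
    (hu : ∀ j, u j ≠ 0 → j ∈ U) (hv : ∀ j, v j ≠ 0 → j ∈ U)
    (hortho : ∀ j, u j = 0 ∨ v j = 0) :
    ∑ r, Φ.mulVec u r * Φ.mulVec v r ≤ δ / 2 * (∑ j, u j ^ 2 + ∑ j, v j ^ 2) := by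
  have hsp : ∀ j, (u + v) j ≠ 0 → j ∈ U := by
    intro j h
    rcases hortho j with h0 | h0
    · exact hv j (by simpa [h0] using h)
    · exact hu j (by simpa [h0] using h)
  have hsm : ∀ j, (u - v) j ≠ 0 → j ∈ U := by
    intro j h
    rcases hortho j with h0 | h0
    · exact hv j (by intro hh; apply h; simp [Pi.sub_apply, h0, hh])
    · exact hu j (by intro hh; apply h; simp [Pi.sub_apply, h0, hh])
  have hp := (ripVec hRIP (u + v) U hU hsp).2
  have hm := (ripVec hRIP (u - v) U hU hsm).1
  have hnp : ∑ j, (u + v) j ^ 2 = ∑ j, u j ^ 2 + ∑ j, v j ^ 2 := by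
    rw [← Finset.sum_add_distrib]
    refine Finset.sum_congr rfl fun j _ => ?_
    rcases hortho j with h0 | h0 <;> simp [h0] <;> ring
  have hnm : ∑ j, (u - v) j ^ 2 = ∑ j, u j ^ 2 + ∑ j, v j ^ 2 := by
    rw [← Finset.sum_add_distrib]
    refine Finset.sum_congr rfl fun j _ => ?_
    rcases hortho j with h0 | h0 <;> simp [h0] <;> ring
  have hmvp : ∀ r, Φ.mulVec (u + v) r = Φ.mulVec u r + Φ.mulVec v r := fun r => by
    rw [Matrix.mulVec_add]; rfl
  have hmvm : ∀ r, Φ.mulVec (u - v) r = Φ.mulVec u r - Φ.mulVec v r := fun r => by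
    rw [Matrix.mulVec_sub]; rfl
  have key : ∑ r, (Φ.mulVec (u + v) r) ^ 2 - ∑ r, (Φ.mulVec (u - v) r) ^ 2
      = 4 * ∑ r, Φ.mulVec u r * Φ.mulVec v r := by
    rw [← Finset.sum_sub_distrib, Finset.mul_sum]
    refine Finset.sum_congr rfl fun r _ => ?_
    rw [hmvp, hmvm]; ring
  rw [hnp] at hp
  rw [hnm] at hm
  linarith [hp, hm, key]

lemma colMul_restrict {m N : ℕ} (Φ : Matrix (Fin m) (Fin N) ℝ) (I : Finset (Fin N))
    (v : Fin N → ℝ) (hs : ∀ j, v j ≠ 0 → j ∈ I) (r : Fin m) :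
    colMul Φ I (fun i => v i.1) r = Φ.mulVec v r :=
  sum_restrict I v hs (fun j t => Φ r j * t) (fun _ => mul_zero _)

lemma ripSet_nonempty {m N : ℕ} (Φ : Matrix (Fin m) (Fin N) ℝ) (K : ℕ) :
    ∃ δ : ℝ, 0 ≤ δ ∧ IsRIP Φ K δ := by
  set S : ℝ := ∑ r, ∑ j, Φ r j ^ 2 with hS
  have hS0 : 0 ≤ S := Finset.sum_nonneg fun r _ => Finset.sum_nonneg fun j _ => sq_nonneg _
  refine ⟨1 + S, by linarith, fun I hI q => ?_⟩
  have hQ : 0 ≤ ∑ i : I, q i ^ 2 := Finset.sum_nonneg fun i _ => sq_nonneg _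
  constructor
  · have h1 : (1 - (1 + S)) * ∑ i : I, q i ^ 2 ≤ 0 :=
      mul_nonpos_of_nonpos_of_nonneg (by linarith) hQ
    exact h1.trans (Finset.sum_nonneg fun r _ => sq_nonneg _)
  · have hrow : ∀ r, (colMul Φ I q r) ^ 2 ≤ (∑ j, Φ r j ^ 2) * ∑ i : I, q i ^ 2 := by
      intro r
      have cs := Finset.sum_mul_sq_le_sq_mul_sq Finset.univ (fun i : I => Φ r i.1) q
      refine cs.trans (mul_le_mul_of_nonneg_right ?_ hQ)
      rw [Finset.sum_coe_sort I (fun j => Φ r j ^ 2)]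
      exact Finset.sum_le_sum_of_subset_of_nonneg (Finset.subset_univ I)
        fun j _ _ => sq_nonneg _
    calc ∑ r, (colMul Φ I q r) ^ 2 ≤ ∑ r, (∑ j, Φ r j ^ 2) * ∑ i : I, q i ^ 2 :=
          Finset.sum_le_sum fun r _ => hrow r
      _ = S * ∑ i : I, q i ^ 2 := by rw [← Finset.sum_mul]
      _ ≤ (1 + (1 + S)) * ∑ i : I, q i ^ 2 := mul_le_mul_of_nonneg_right (by linarith) hQ

set_option maxHeartbeats 1000000 in
theorem initialization_nonempty_intersection {m N : ℕ}
    (Φ : Matrix (Fin m) (Fin N) ℝ) (K : ℕ)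
    (x : Fin N → ℝ) (hx : x ≠ 0) (T T0 : Finset (Fin N))
    (hsupp : ∀ i, x i ≠ 0 ↔ i ∈ T) (hT : T.card ≤ K)
    (hT0 : T0.card = K)
    (hmax : ∀ S : Finset (Fin N), S.card ≤ K →
      l2norm (colTMul Φ S (Φ.mulVec x)) ≤ l2norm (colTMul Φ T0 (Φ.mulVec x)))
    (hδ : ripConst Φ (2 * K) < 1 / 2) :
    (T ∩ T0).Nonempty := by
  by_contra hne
  rw [Finset.not_nonempty_iff_eq_empty] at hne
  have hdisj : Disjoint T T0 := Finset.disjoint_left.mpr fun a ha ha0 => by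
    have : a ∈ T ∩ T0 := Finset.mem_inter.mpr ⟨ha, ha0⟩
    simp [hne] at this
  -- extract a RIP constant δ < 1/2
  have hbdd : BddBelow {δ : ℝ | 0 ≤ δ ∧ IsRIP Φ (2 * K) δ} := ⟨0, fun δ hδ' => hδ'.1⟩
  obtain ⟨δ, ⟨hδ0, hRIP⟩, hδh⟩ :=
    (csInf_lt_iff hbdd (ripSet_nonempty Φ (2 * K))).mp hδ
  have hxT : ∀ j, x j ≠ 0 → j ∈ T := fun j h => (hsupp j).1 h
  set y : Fin m → ℝ := Φ.mulVec x with hy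
  set A : ℝ := ∑ j, x j ^ 2 with hA
  have hA0 : 0 < A := by
    obtain ⟨j, hj⟩ := Function.ne_iff.mp hx
    have h1 : x j ^ 2 ≤ A := Finset.single_le_sum (fun i _ => sq_nonneg (x i))
      (Finset.mem_univ j)
    have hj' : x j ≠ 0 := by simpa using hj
    have h2 : 0 < x j ^ 2 := by positivity
    linarith
  set sA : ℝ := Real.sqrt A with hsAdef
  have hsA : 0 < sA := Real.sqrt_pos.mpr hA0
  have hsA2 : sA * sA = A := Real.mul_self_sqrt hA0.le
  have hT2K : T.card ≤ 2 * K := hT.trans (by omega)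
  -- lower RIP bound on y
  have hyl : (1 - δ) * A ≤ ∑ r, y r ^ 2 := (ripVec hRIP x T hT2K hxT).1
  set colT : T → ℝ := colTMul Φ T y with hcolT
  have id2 : ∑ i : T, x i.1 * colT i = ∑ r, y r ^ 2 := by
    rw [← adjoint_id Φ T (fun i => x i.1) y]
    exact Finset.sum_congr rfl fun r _ => by
      rw [colMul_restrict Φ T x hxT r, ← hy]; ring
  set CT2 : ℝ := ∑ i : T, colT i ^ 2 with hCT2
  have hCT2nn : 0 ≤ CT2 := Finset.sum_nonneg fun i _ => sq_nonneg _
  have hxT2 : ∑ i : T, x i.1 ^ 2 = A :=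
    sum_restrict T x hxT (fun _ t => t ^ 2) (by norm_num)
  have cs1 : (∑ i : T, x i.1 * colT i) ^ 2 ≤ A * CT2 := by
    have := Finset.sum_mul_sq_le_sq_mul_sq Finset.univ (fun i : T => x i.1) colT
    rwa [hxT2] at this
  have hdel : (0:ℝ) < 1 - δ := by linarith
  have hyl2 : ((1 - δ) * A) ^ 2 ≤ A * CT2 := by
    have h1 : (1 - δ) * A ≤ ∑ i : T, x i.1 * colT i := by rw [id2]; exact hyl
    have h2 : 0 ≤ (1 - δ) * A := by positivity
    nlinarith
  have hCTlb : (1 - δ) ^ 2 * A ≤ CT2 := by nlinarith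
  have lower : (1 - δ) * sA ≤ l2norm colT := by
    have h1 : Real.sqrt ((1 - δ) ^ 2 * A) ≤ Real.sqrt CT2 := Real.sqrt_le_sqrt hCTlb
    rwa [Real.sqrt_mul (sq_nonneg _), Real.sqrt_sq hdel.le] at h1
  -- upper bound on T0
  set q : T0 → ℝ := colTMul Φ T0 y with hq
  set B : ℝ := ∑ i : T0, q i ^ 2 with hB
  have hB0 : 0 ≤ B := Finset.sum_nonneg fun i _ => sq_nonneg _
  set sB : ℝ := Real.sqrt B with hsBdef
  have hsB2 : sB * sB = B := Real.mul_self_sqrt hB0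
  have hl2q : l2norm q = sB := rfl
  set w : Fin N → ℝ := extv T0 q with hw
  have hwsum : ∑ j, w j ^ 2 = B := extv_sum_sq T0 q
  have id1 : ∑ r, Φ.mulVec w r * y r = B := by
    have h1 : ∀ r, Φ.mulVec w r = colMul Φ T0 q r := mulVec_extv Φ T0 q
    calc ∑ r, Φ.mulVec w r * y r = ∑ r, colMul Φ T0 q r * y r :=
          Finset.sum_congr rfl fun r _ => by rw [h1]
      _ = ∑ i : T0, q i * colTMul Φ T0 y i := adjoint_id Φ T0 q y
      _ = B := by rw [hB]; exact Finset.sum_congr rfl fun i _ => by rw [← hq]; ring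
  set U : Finset (Fin N) := T ∪ T0 with hU
  have hUcard : U.card ≤ 2 * K := by
    rw [hU, Finset.card_union_of_disjoint hdisj]; omega
  set u : Fin N → ℝ := fun j => sB * x j with hu'
  set v : Fin N → ℝ := fun j => sA * w j with hv'
  have hu : ∀ j, u j ≠ 0 → j ∈ U := fun j h =>
    Finset.mem_union_left _ (hxT j (right_ne_zero_of_mul h))
  have hv : ∀ j, v j ≠ 0 → j ∈ U := fun j h =>
    Finset.mem_union_right _ (extv_support T0 q j (right_ne_zero_of_mul h))
  have hortho : ∀ j, u j = 0 ∨ v j = 0 := by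
    intro j
    by_cases hj : x j = 0
    · left; rw [hu']; simp [hj]
    · right
      have hjT : j ∈ T := hxT j hj
      have hjT0 : j ∉ T0 := Finset.disjoint_left.mp hdisj hjT
      rw [hv']
      simp [hw, extv, hjT0]
  have cross := crossIneq hRIP u v U hUcard hu hv hortho
  have hmu : ∀ r, Φ.mulVec u r = sB * Φ.mulVec x r := fun r => by
    simp only [Matrix.mulVec, dotProduct, hu', Finset.mul_sum]
    exact Finset.sum_congr rfl fun j _ => by ring
  have hmv : ∀ r, Φ.mulVec v r = sA * Φ.mulVec w r := fun r => by
    simp only [Matrix.mulVec, dotProduct, hv', Finset.mul_sum]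
    exact Finset.sum_congr rfl fun j _ => by ring
  have hL : ∑ r, Φ.mulVec u r * Φ.mulVec v r = sA * sB * B := by
    have h1 : ∀ r, Φ.mulVec u r * Φ.mulVec v r
        = (sA * sB) * (Φ.mulVec w r * y r) := fun r => by
      rw [hmu, hmv, hy]; ring
    rw [Finset.sum_congr rfl fun r _ => h1 r, ← Finset.mul_sum, id1]
  have hRu : ∑ j, u j ^ 2 = B * A := by
    rw [hu']
    simp only [mul_pow]
    rw [← Finset.mul_sum, ← hA, sq, hsB2]
  have hRv : ∑ j, v j ^ 2 = A * B := by
    rw [hv']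
    simp only [mul_pow]
    rw [← Finset.mul_sum, hwsum, sq, hsA2]
  rw [hL, hRu, hRv] at cross
  -- cross : sA * sB * B ≤ δ / 2 * (B * A + A * B)
  have upper : sB ≤ δ * sA := by
    rcases eq_or_lt_of_le hB0 with hB0' | hBpos
    · have : sB = 0 := by rw [hsBdef, ← hB0', Real.sqrt_zero]
      rw [this]; positivity
    · have c1 : sA * sB * B ≤ (δ * A) * B := by linarith [cross]
      have c2 : sA * sB ≤ δ * A := le_of_mul_le_mul_right c1 hBpos
      have c3 : sA * sB ≤ sA * (δ * sA) := by
        rw [show sA * (δ * sA) = δ * (sA * sA) by ring, hsA2]; linarith [c2]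
      exact le_of_mul_le_mul_left c3 hsA
  have hmaxT := hmax T hT
  rw [← hcolT, hl2q] at hmaxT
  nlinarith [lower, hmaxT, upper, hsA, hδh]
end

section
/- With the setup of the SP pruning step: let x be K-sparse with support T, |T̃| = 2K, x_p = Φ_{T̃}^† y the projection coefficients, and let T^ℓ ⊂ T̃ be the K indices of largest magnitude in x_p, ΔT = T̃ − T^ℓ. If ε = x_p − x_{T̃}, then ‖x_{T∩ΔT}‖₂ ≤ 2‖ε‖₂. -/
open scoped BigOperators

/-!
Write `p` for the projection coefficients and `ε = p - x` on `T̃`. Since `|T̃ \ T| ≥ K = |ΔT|`,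
there is a set `T' ⊆ T̃ \ T` of size `|ΔT|`. On `T'` we have `p = ε`, and `ΔT` consists of the
smallest entries of `|p|`, so `‖p_{ΔT}‖ ≤ ‖p_{T'}‖ ≤ ‖ε‖`. On `T ∩ ΔT` we have `x = p - ε`, hence
`‖x_{T ∩ ΔT}‖ ≤ ‖p_{ΔT}‖ + ‖ε‖ ≤ 2‖ε‖`.
-/

open Finset

section L2Norm

variable {ι α : Type*}

theorem l2norm_eq_norm_toLp [Fintype ι] (v : ι → ℝ) : l2norm v = ‖WithLp.toLp 2 v‖ := by
  simp [l2norm, EuclideanSpace.norm_eq, sq_abs]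

theorem l2norm_add_le [Fintype ι] (v w : ι → ℝ) : l2norm (v + w) ≤ l2norm v + l2norm w := by
  simpa only [l2norm_eq_norm_toLp, WithLp.toLp_add] using norm_add_le _ _

theorem l2norm_coe_finset (s : Finset α) (v : α → ℝ) :
    l2norm (fun i : s => v i) = √(∑ i ∈ s, v i ^ 2) := by
  rw [l2norm, Finset.sum_coe_sort s (fun i => v i ^ 2)]

end L2Norm

theorem Finset.sum_le_sum_of_card_le_of_forall_le {α β : Type*} [AddCommMonoid β] [LinearOrder β]
    [IsOrderedAddMonoid β] {f : α → β} {A B : Finset α} (hf : ∀ b ∈ B, 0 ≤ f b)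
    (hcard : #A ≤ #B) (h : ∀ a ∈ A, ∀ b ∈ B, f a ≤ f b) : ∑ a ∈ A, f a ≤ ∑ b ∈ B, f b := by
  rcases A.eq_empty_or_nonempty with rfl | hA
  · simpa using Finset.sum_nonneg hf
  obtain ⟨b₀, hb₀, hmin⟩ := B.exists_min_image f (hA.card_pos.trans_le hcard |> card_pos.mp)
  calc ∑ a ∈ A, f a ≤ #A • f b₀ := Finset.sum_le_card_nsmul A f (f b₀) fun a ha => h a ha b₀ hb₀
    _ ≤ #B • f b₀ := nsmul_le_nsmul_left (hf b₀ hb₀) hcard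
    _ ≤ ∑ b ∈ B, f b := Finset.card_nsmul_le_sum B f (f b₀) hmin

section Pruning

variable {α : Type*} [DecidableEq α] {P x : α → ℝ} {T Tt Tl : Finset α}

theorem sum_sq_sdiff_le_of_forall_abs_le {A : Finset α} (hA : A ⊆ Tt) (hcard : #(Tt \ Tl) ≤ #A)
    (hsel : ∀ i ∈ Tl, ∀ j ∈ Tt \ Tl, |P j| ≤ |P i|) :
    ∑ i ∈ Tt \ Tl, P i ^ 2 ≤ ∑ i ∈ A, P i ^ 2 := by
  set D := Tt \ Tl
  rw [← sum_inter_add_sum_sdiff D A, ← sum_inter_add_sum_sdiff A D, inter_comm D A]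
  refine add_le_add le_rfl ?_
  refine sum_le_sum_of_card_le_of_forall_le (fun _ _ => sq_nonneg _) ?_ fun j hj i hi => ?_
  · have h₁ := card_sdiff_add_card_inter D A
    have h₂ := card_sdiff_add_card_inter A D
    rw [inter_comm] at h₂
    omega
  · have hiTl : i ∈ Tl := by
      by_contra hiTl
      exact (mem_sdiff.mp hi).2 (mem_sdiff.mpr ⟨hA (mem_sdiff.mp hi).1, hiTl⟩)
    exact sq_le_sq.mpr (hsel i hiTl j (mem_sdiff.mp hj).1)

theorem sum_sq_pruned_le (hsupp : ∀ i, i ∉ T → x i = 0) (hcard : #(Tt \ Tl) ≤ #(Tt \ T))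
    (hsel : ∀ i ∈ Tl, ∀ j ∈ Tt \ Tl, |P j| ≤ |P i|) :
    ∑ i ∈ Tt \ Tl, P i ^ 2 ≤ ∑ i ∈ Tt, (P i - x i) ^ 2 := by
  obtain ⟨A, hA, hAcard⟩ := exists_subset_card_eq hcard
  have hATt : A ⊆ Tt := hA.trans sdiff_subset
  calc ∑ i ∈ Tt \ Tl, P i ^ 2 ≤ ∑ i ∈ A, P i ^ 2 :=
        sum_sq_sdiff_le_of_forall_abs_le hATt hAcard.ge hsel
    _ = ∑ i ∈ A, (P i - x i) ^ 2 :=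
        sum_congr rfl fun i hi => by rw [hsupp i (mem_sdiff.mp (hA hi)).2, sub_zero]
    _ ≤ ∑ i ∈ Tt, (P i - x i) ^ 2 :=
        sum_le_sum_of_subset_of_nonneg hATt fun _ _ _ => sq_nonneg _

theorem l2norm_inter_pruned_le (hsupp : ∀ i, i ∉ T → x i = 0) (hcard : #(Tt \ Tl) ≤ #(Tt \ T))
    (hsel : ∀ i ∈ Tl, ∀ j ∈ Tt \ Tl, |P j| ≤ |P i|) :
    l2norm (fun i : (T ∩ (Tt \ Tl) : Finset α) => x i) ≤
      2 * l2norm (fun i : Tt => P i - x i) := by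
  set S := T ∩ (Tt \ Tl)
  have hSD : S ⊆ Tt \ Tl := inter_subset_right
  have hP : l2norm (fun i : S => P i) ≤ l2norm (fun i : Tt => P i - x i) := by
    rw [l2norm_coe_finset S P, l2norm_coe_finset Tt fun i => P i - x i]
    exact Real.sqrt_le_sqrt <| (sum_le_sum_of_subset_of_nonneg hSD fun _ _ _ => sq_nonneg _).trans
      (sum_sq_pruned_le hsupp hcard hsel)
  have hε : l2norm (fun i : S => x i - P i) ≤ l2norm (fun i : Tt => P i - x i) := by
    rw [l2norm_coe_finset S fun i => x i - P i, l2norm_coe_finset Tt fun i => P i - x i]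
    refine Real.sqrt_le_sqrt ?_
    simp_rw [sub_sq_comm (x _)]
    exact sum_le_sum_of_subset_of_nonneg (hSD.trans sdiff_subset) fun _ _ _ => sq_nonneg _
  calc l2norm (fun i : S => x i)
      = l2norm ((fun i : S => P i) + fun i : S => x i - P i) := by
        congr 1
        funext i
        simp
    _ ≤ l2norm (fun i : S => P i) + l2norm (fun i : S => x i - P i) := l2norm_add_le _ _
    _ ≤ 2 * l2norm (fun i : Tt => P i - x i) := by linarith

end Pruning

theorem pruning_capture_general {m N : ℕ} (Φ : Matrix (Fin m) (Fin N) ℝ) (K : ℕ)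
    (x : Fin N → ℝ) (T Tt Tl : Finset (Fin N))
    (hsupp : ∀ i, i ∉ T → x i = 0) (hT : T.card ≤ K)
    (hTt : Tt.card = 2 * K)
    (hTl : Tl ⊆ Tt) (hTlcard : Tl.card = K)
    (hsel : ∀ i, ∀ hi : i ∈ Tl, ∀ j, ∀ hj : j ∈ Tt, j ∉ Tl →
      |projCoeff Φ Tt (Φ.mulVec x) ⟨j, hj⟩| ≤
        |projCoeff Φ Tt (Φ.mulVec x) ⟨i, hTl hi⟩|) :
    l2norm (fun i : (T ∩ (Tt \ Tl) : Finset (Fin N)) => x i.1) ≤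
      2 * l2norm (fun i : Tt => projCoeff Φ Tt (Φ.mulVec x) i - x i.1) := by
  set p := projCoeff Φ Tt (Φ.mulVec x)
  let P : Fin N → ℝ := fun i => if h : i ∈ Tt then p ⟨i, h⟩ else 0
  have hP : ∀ i (h : i ∈ Tt), P i = p ⟨i, h⟩ := fun i h => dif_pos h
  have hcard : #(Tt \ Tl) ≤ #(Tt \ T) := by
    rw [card_sdiff_of_subset hTl]
    have := le_card_sdiff T Tt
    omega
  have hselP : ∀ i ∈ Tl, ∀ j ∈ Tt \ Tl, |P j| ≤ |P i| := fun i hi j hj => by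
    rw [hP j (mem_sdiff.mp hj).1, hP i (hTl hi)]
    exact hsel i hi j _ (mem_sdiff.mp hj).2
  have hRHS : (fun i : Tt => p i - x i.1) = fun i : Tt => P i - x i := by
    funext i
    rw [hP i.1 i.2]
  rw [hRHS]
  exact l2norm_inter_pruned_le hsupp hcard hselP

theorem pruning_capture {m N : ℕ} (Φ : Matrix (Fin m) (Fin N) ℝ) (K : ℕ)
    (x : Fin N → ℝ) (T Tt Tl : Finset (Fin N))
    (hsupp : ∀ i, i ∉ T → x i = 0) (hT : T.card ≤ K)
    (hTt : Tt.card = 2 * K) (hg : IsUnit (gram Φ Tt))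
    (hTl : Tl ⊆ Tt) (hTlcard : Tl.card = K)
    (hsel : ∀ i, ∀ hi : i ∈ Tl, ∀ j, ∀ hj : j ∈ Tt, j ∉ Tl →
      |projCoeff Φ Tt (Φ.mulVec x) ⟨j, hj⟩| ≤
        |projCoeff Φ Tt (Φ.mulVec x) ⟨i, hTl hi⟩|) :
    l2norm (fun i : (T ∩ (Tt \ Tl) : Finset (Fin N)) => x i.1) ≤
      2 * l2norm (fun i : Tt => projCoeff Φ Tt (Φ.mulVec x) i - x i.1) :=
  pruning_capture_general Φ K x T Tt Tl hsupp hT hTt hTl hTlcard hsel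
end

section
/- Under the hypotheses of the block lemma (entries sorted by decreasing magnitude, block T_j = {i,...,i+s−1} satisfying (1/2)|x_ℓ| ≤ ‖x_{{ℓ+1,...,K}}‖₂ for ℓ = i,...,i+s−2 and (1/2)|x_{i+s−1}| > ‖x_{{i+s,...,K}}‖₂), it holds that |x_{i+s−1}| ≥ (2/3^s) ‖x_{{i,...,K}}‖₂. -/
/-! Write `T j` for the ℓ₂ norm of the tail `x_j, …, x_K`. The triangle inequality gives
`T j ≤ |x j| + T (j + 1)`, so inside the block, where `|x j| ≤ 2 T (j + 1)`, the tail norm grows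
by at most a factor `3` per step, while at the last index `T (i + s - 1) ≤ (3 / 2) |x (i + s - 1)|`.
Hence `T i ≤ 3 ^ (s - 1) · (3 / 2) |x (i + s - 1)|`. -/

open scoped BigOperators

open Finset

lemma sqrt_sq_add_le_abs_add_sqrt (a b : ℝ) (hb : 0 ≤ b) : √(a ^ 2 + b) ≤ |a| + √b := by
  rw [Real.sqrt_le_iff]
  refine ⟨by positivity, ?_⟩
  nlinarith [Real.sq_sqrt hb, Real.sqrt_nonneg b, abs_nonneg a, sq_abs a]

lemma sqrt_sum_Icc_sq_le_abs_add (x : ℕ → ℝ) (j K : ℕ) :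
    √(∑ t ∈ Icc j K, x t ^ 2) ≤ |x j| + √(∑ t ∈ Icc (j + 1) K, x t ^ 2) := by
  rcases le_or_gt j K with hjK | hKj
  · rw [← insert_Icc_add_one_left_eq_Icc hjK, sum_insert (by simp)]
    exact sqrt_sq_add_le_abs_add_sqrt _ _ (sum_nonneg fun t _ => sq_nonneg _)
  · rw [Icc_eq_empty_of_lt hKj, sum_empty, Real.sqrt_zero]
    positivity

lemma le_pow_mul_of_le_mul_succ {T : ℕ → ℝ} {c : ℝ} (hc : 0 ≤ c) {i : ℕ} :
    ∀ n : ℕ, (∀ j, i ≤ j → j < i + n → T j ≤ c * T (j + 1)) → T i ≤ c ^ n * T (i + n)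
  | 0, _ => by simp
  | n + 1, h => calc
      T i ≤ c ^ n * T (i + n) :=
        le_pow_mul_of_le_mul_succ hc n fun j hij hjn => h j hij (by omega)
      _ ≤ c ^ n * (c * T (i + n + 1)) :=
        mul_le_mul_of_nonneg_left (h (i + n) (by omega) (by omega)) (by positivity)
      _ = c ^ (n + 1) * T (i + (n + 1)) := by ring_nf

theorem block_last_entry_bound_general {K : ℕ} (x : ℕ → ℝ)
    (i s : ℕ) (hs : 1 ≤ s)
    (hblock : ∀ j, i ≤ j → j + 1 ≤ i + s - 1 →
      (1 / 2) * |x j| ≤ Real.sqrt (∑ t ∈ Finset.Icc (j + 1) K, x t ^ 2))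
    (hterm : Real.sqrt (∑ t ∈ Finset.Icc (i + s) K, x t ^ 2) <
      (1 / 2) * |x (i + s - 1)|) :
    (2 / 3 ^ s) * Real.sqrt (∑ t ∈ Finset.Icc i K, x t ^ 2) ≤ |x (i + s - 1)| := by
  obtain ⟨n, rfl⟩ : ∃ n, s = n + 1 := ⟨s - 1, by omega⟩
  rw [show i + (n + 1) - 1 = i + n by omega] at hblock hterm ⊢
  rw [← add_assoc] at hterm
  set T : ℕ → ℝ := fun j => √(∑ t ∈ Icc j K, x t ^ 2)
  have hgrowth : ∀ j, i ≤ j → j < i + n → T j ≤ 3 * T (j + 1) := fun j hij hjn => by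
    linarith [sqrt_sum_Icc_sq_le_abs_add x j K, hblock j hij (by omega)]
  have hlast : T (i + n) ≤ 3 / 2 * |x (i + n)| := by
    linarith [sqrt_sum_Icc_sq_le_abs_add x (i + n) K]
  calc 2 / 3 ^ (n + 1) * T i
      ≤ 2 / 3 ^ (n + 1) * (3 ^ n * (3 / 2 * |x (i + n)|)) := by
        gcongr
        exact (le_pow_mul_of_le_mul_succ (by norm_num) n hgrowth).trans (by gcongr)
    _ = |x (i + n)| := by field_simp; ring

theorem block_last_entry_bound {K : ℕ} (x : ℕ → ℝ)
    (hsort : ∀ j, 1 ≤ j → j < K → |x (j + 1)| ≤ |x j|)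
    (hpos : 0 < |x K|)
    (i s : ℕ) (hi : 1 ≤ i) (hs : 1 ≤ s) (hend : i + s - 1 ≤ K)
    (hblock : ∀ j, i ≤ j → j + 1 ≤ i + s - 1 →
      (1 / 2) * |x j| ≤ Real.sqrt (∑ t ∈ Finset.Icc (j + 1) K, x t ^ 2))
    (hterm : Real.sqrt (∑ t ∈ Finset.Icc (i + s) K, x t ^ 2) <
      (1 / 2) * |x (i + s - 1)|) :
    (2 / 3 ^ s) * Real.sqrt (∑ t ∈ Finset.Icc i K, x t ^ 2) ≤ |x (i + s - 1)| :=
  block_last_entry_bound_general x i s hs hblock hterm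
end
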